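/- arXiv:1203.4075 — 2 statements merged into one kernel-verified Lean document; each statement's English description precedes it below -/
import Mathlib

section
/- Let K be a convex body in ℝⁿ and T a convex body that tiles ℝⁿ by translations along a sublattice Λ of ℤⁿ (i.e. Λ + T = ℝⁿ and the translates x + int T for x ∈ Λ are pairwise disjoint). Then #(K ∩ ℤⁿ) ≤ vol(K + T), where K + T is the Minkowski sum. -/
/-!
Sort the lattice points of `K` by their class modulo `Λ`. Since `T` is convex its boundary is
null, so `T` is a measure-theoretic fundamental domain of `Λ`: the translates `z + T` of the
points `z` of one class overlap only in null sets, and they lie in `K + T`, so each class contains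
at most `vol (K + T) / vol T` points. On the other hand, translating the unit cube by one point of
each class gives a set whose `Λ`-translates are a.e. disjoint, so its volume, the number of
classes, is at most `vol T`.
-/

open MeasureTheory Set Pointwise

noncomputable section

/-- The integer lattice ℤⁿ inside ℝⁿ. -/
def latt (n : ℕ) : Set (Fin n → ℝ) := {x | ∀ i, ∃ m : ℤ, x i = (m : ℝ)}

open scoped ENNReal
open Finset (card)

theorem Finset.card_mul_le_card_image_mul {α β R : Type*} [DecidableEq β] [Semiring R]
    [PartialOrder R] [IsOrderedAddMonoid R] (s : Finset α) (f : α → β) {a b : R}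
    (h : ∀ c ∈ s.image f, card {x ∈ s | f x = c} * a ≤ b) :
    card s * a ≤ card (s.image f) * b := by
  rw [card_eq_sum_card_image f s, Nat.cast_sum, Finset.sum_mul, ← nsmul_eq_mul,
    ← Finset.sum_const]
  exact Finset.sum_le_sum h

namespace MeasureTheory.IsAddFundamentalDomain

variable {G : Type*} [AddCommGroup G] [MeasurableSpace G] {μ : Measure G} [μ.IsAddLeftInvariant]
  {Λ L : AddSubgroup G} {s D T : Set G}

theorem of_disjoint_interior_vadd [TopologicalSpace G] (hT : NullMeasurableSet T μ)
    (hfr : μ (frontier T) = 0) (hcover : ⋃ x ∈ Λ, x +ᵥ T = univ)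
    (hpack : ∀ x ∈ Λ, ∀ y ∈ Λ, x ≠ y → (x +ᵥ interior T) ∩ (y +ᵥ interior T) = ∅) :
    IsAddFundamentalDomain Λ T μ where
  nullMeasurableSet := hT
  ae_covers := Filter.Eventually.of_forall fun x => by
    obtain ⟨l, hl, hx⟩ := mem_iUnion₂.mp (hcover.symm ▸ mem_univ x : x ∈ ⋃ l ∈ Λ, l +ᵥ T)
    exact ⟨⟨-l, neg_mem hl⟩, mem_vadd_set_iff_neg_vadd_mem.mp hx⟩
  aedisjoint l l' hne := by
    have hint : T =ᵐ[μ] interior T := (interior_ae_eq_of_null_frontier hfr).symm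
    refine (Disjoint.aedisjoint ?_).congr ((vadd_set_ae_eq l).mpr hint)
      ((vadd_set_ae_eq l').mpr hint)
    exact disjoint_iff_inter_eq_empty.mpr (hpack l l.2 l' l'.2 (Subtype.coe_injective.ne hne))

theorem aedisjoint_vadd (hs : IsAddFundamentalDomain Λ s μ) {a b : G} (hab : -a + b ∈ Λ)
    (hne : a ≠ b) : AEDisjoint μ (a +ᵥ s) (b +ᵥ s) := by
  have h0 : (0 : Λ) ≠ ⟨-a + b, hab⟩ := fun h =>
    hne (neg_add_eq_zero.mp (congrArg Subtype.val h).symm)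
  have hb : b +ᵥ s = a +ᵥ ((-a + b) +ᵥ s) := by rw [vadd_vadd, add_neg_cancel_left]
  rw [AEDisjoint, hb, ← vadd_set_inter, measure_vadd]
  simpa [AEDisjoint] using hs.aedisjoint h0

variable [MeasurableAdd G]

theorem measure_biUnion_vadd (hs : IsAddFundamentalDomain Λ s μ) (F : Finset G)
    (hF : ∀ a ∈ F, ∀ b ∈ F, -a + b ∈ Λ) : μ (⋃ a ∈ F, a +ᵥ s) = card F * μ s := by
  rw [measure_biUnion_finset₀ (fun a ha b hb hab => hs.aedisjoint_vadd (hF a ha b hb) hab)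
    (fun a _ => hs.nullMeasurableSet.vadd a)]
  simp [measure_vadd]

theorem card_mul_measure_le_measure_add (hs : IsAddFundamentalDomain Λ s μ) {K : Set G}
    {F : Finset G} (hFK : ↑F ⊆ K) (hF : ∀ a ∈ F, ∀ b ∈ F, -a + b ∈ Λ) :
    card F * μ s ≤ μ (K + s) := by
  rw [← hs.measure_biUnion_vadd F hF]
  exact measure_mono (iUnion₂_subset fun a ha => vadd_set_subset_add (hFK ha))

theorem card_mul_measure_le [Countable Λ] (hD : IsAddFundamentalDomain L D μ)
    (hT : IsAddFundamentalDomain Λ T μ) (hΛL : Λ ≤ L) {R : Finset G} (hRL : ↑R ⊆ (L : Set G))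
    (hR : (R : Set G).InjOn (QuotientAddGroup.mk : G → G ⧸ Λ)) : card R * μ D ≤ μ T := by
  rw [← hD.measure_biUnion_vadd R fun a ha b hb => add_mem (neg_mem (hRL ha)) (hRL hb),
    ← R.set_biUnion_coe, biUnion_eq_iUnion]
  refine hT.measure_le_of_pairwise_disjoint
    (NullMeasurableSet.iUnion fun a => hD.nullMeasurableSet.vadd _) fun l l' hne => ?_
  refine AEDisjoint.mono ?_ inter_subset_left inter_subset_left
  simp only [vadd_set_iUnion, AEDisjoint.iUnion_left_iff, AEDisjoint.iUnion_right_iff]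
  rintro ⟨b, hb⟩ ⟨a, ha⟩
  change AEDisjoint μ ((l : G) +ᵥ (a +ᵥ D)) ((l' : G) +ᵥ (b +ᵥ D))
  rw [vadd_vadd, vadd_vadd]
  refine hD.aedisjoint_vadd (add_mem (neg_mem (add_mem (hΛL l.2) (hRL ha)))
    (add_mem (hΛL l'.2) (hRL hb))) fun h => hne ?_
  have hab : a = b := hR ha hb <| QuotientAddGroup.eq.mpr <| by
    rw [show -a + b = l - l' by rw [neg_add_eq_sub, sub_eq_sub_iff_add_eq_add, add_comm, ← h]]
    exact sub_mem l.2 l'.2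
  subst hab
  exact Subtype.ext (add_right_cancel h)

theorem card_image_mk_mul_measure_le [Countable Λ] [DecidableEq (G ⧸ Λ)]
    (hD : IsAddFundamentalDomain L D μ) (hT : IsAddFundamentalDomain Λ T μ) (hΛL : Λ ≤ L)
    {F : Finset G} (hFL : ↑F ⊆ (L : Set G)) :
    card (F.image (QuotientAddGroup.mk : G → G ⧸ Λ)) * μ D ≤ μ T := by
  obtain ⟨u, huF, hinj, hu⟩ :=
    (surjOn_image (QuotientAddGroup.mk : G → G ⧸ Λ) (F : Set G)).exists_subset_injOn_image_eq
  obtain ⟨R, rfl⟩ := (F.finite_toSet.subset huF).exists_finset_coe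
  have himage : F.image QuotientAddGroup.mk = R.image (QuotientAddGroup.mk : G → G ⧸ Λ) := by
    apply Finset.coe_injective
    push_cast
    exact hu.symm
  rw [himage, Finset.card_image_of_injOn hinj]
  exact card_mul_measure_le hD hT hΛL (huF.trans hFL) hinj

end MeasureTheory.IsAddFundamentalDomain

theorem coe_span_int_pi_basisFun (n : ℕ) :
    (Submodule.span ℤ (range (Pi.basisFun ℝ (Fin n))) : Set (Fin n → ℝ)) = latt n := by
  ext x
  simp [Module.Basis.mem_span_iff_repr_mem, latt, eq_comm]

theorem volume_fundamentalDomain_pi_basisFun (n : ℕ) :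
    volume (ZSpan.fundamentalDomain (Pi.basisFun ℝ (Fin n))) = 1 := by
  simp [ZSpan.fundamentalDomain_pi_basisFun, volume_pi_pi]

theorem card_le_vol_add_tile_general (n : ℕ) (K T : Set (Fin n → ℝ))
    (hK_cpt : IsCompact K)
    (hT_cpt : IsCompact T) (hT_conv : Convex ℝ T)
    (Λ : AddSubgroup (Fin n → ℝ))
    (hΛ_sub : (Λ : Set (Fin n → ℝ)) ⊆ latt n)
    (h_cover : (⋃ x ∈ Λ, x +ᵥ T) = Set.univ)
    (h_pack : ∀ x ∈ Λ, ∀ y ∈ Λ, x ≠ y → (x +ᵥ interior T) ∩ (y +ᵥ interior T) = ∅) :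
    ((K ∩ latt n).ncard : ℝ) ≤ (volume (K + T)).toReal := by
  classical
  set b := Pi.basisFun ℝ (Fin n)
  set L := (Submodule.span ℤ (range b)).toAddSubgroup
  have hL : (L : Set (Fin n → ℝ)) = latt n := coe_span_int_pi_basisFun n
  have hΛL : Λ ≤ L := fun x hx => by rw [← SetLike.mem_coe, hL]; exact hΛ_sub hx
  have : Countable L := inferInstanceAs (Countable (Submodule.span ℤ (range b)))
  have : Countable Λ := (AddSubgroup.inclusion_injective hΛL).countable
  have hT : IsAddFundamentalDomain Λ T volume := .of_disjoint_interior_vadd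
    hT_cpt.isClosed.measurableSet.nullMeasurableSet (hT_conv.addHaar_frontier volume) h_cover h_pack
  have hS : (K ∩ latt n).Finite := hL ▸ ZSpan.setFinite_inter b hK_cpt.isBounded
  set F := hS.toFinset
  set q : (Fin n → ℝ) → (Fin n → ℝ) ⧸ Λ := QuotientAddGroup.mk
  have hfiber (c) (_ : c ∈ F.image q) : card {z ∈ F | q z = c} * volume T ≤ volume (K + T) :=
    hT.card_mul_measure_le_measure_add
      (fun z hz => (hS.mem_toFinset.mp (Finset.mem_filter.mp hz).1).1) fun z hz w hw =>
      QuotientAddGroup.eq.mp ((Finset.mem_filter.mp hz).2.trans (Finset.mem_filter.mp hw).2.symm)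
  have hcosets : (card (F.image q) : ℝ≥0∞) ≤ volume T := by
    have := (ZSpan.isAddFundamentalDomain' b volume).card_image_mk_mul_measure_le hT hΛL
      (F := F) fun z hz => by rw [hL]; exact (hS.mem_toFinset.mp hz).2
    rwa [volume_fundamentalDomain_pi_basisFun, mul_one] at this
  have key : (card F : ℝ≥0∞) * volume T ≤ volume (K + T) * volume T := by
    rw [mul_comm (volume (K + T))]
    exact (F.card_mul_le_card_image_mul q hfiber).trans (mul_le_mul_left hcosets _)
  have hT0 : volume T ≠ 0 := hT.measure_ne_zero (NeZero.ne volume)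
  rw [Set.ncard_eq_toFinset_card _ hS]
  exact ENNReal.toReal_mono (hK_cpt.add hT_cpt).measure_lt_top.ne
    ((ENNReal.mul_le_mul_iff_left hT0 hT_cpt.measure_lt_top.ne).mp key)

/-- Lattice tiles give an upper bound on the number of lattice points:
`#(K ∩ ℤⁿ) ≤ vol(K + T)`. -/
theorem card_le_vol_add_tile (n : ℕ) (K T : Set (Fin n → ℝ))
    (hK_cpt : IsCompact K) (hK_conv : Convex ℝ K) (hK_int : (interior K).Nonempty)
    (hT_cpt : IsCompact T) (hT_conv : Convex ℝ T) (hT_int : (interior T).Nonempty)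
    (Λ : AddSubgroup (Fin n → ℝ))
    (hΛ_sub : (Λ : Set (Fin n → ℝ)) ⊆ latt n)
    (hΛ_rank : Submodule.span ℝ (Λ : Set (Fin n → ℝ)) = ⊤)
    (h_cover : (⋃ x ∈ Λ, x +ᵥ T) = Set.univ)
    (h_pack : ∀ x ∈ Λ, ∀ y ∈ Λ, x ≠ y → (x +ᵥ interior T) ∩ (y +ᵥ interior T) = ∅) :
    ((K ∩ latt n).ncard : ℝ) ≤ (volume (K + T)).toReal :=
  card_le_vol_add_tile_general n K T hK_cpt hT_cpt hT_conv Λ hΛ_sub h_cover h_pack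
end
end

section
/- For all k ≥ 0, (k+1)/4 ≥ ((k+2)/(2π)) · L_k(2)/L_{k+1}(2), where L_k(x) = ∑_{i=0}^k C(k,i) x^i/i!. Consequently, the function g(k) = 4^k / (k! · κ_k² · L_k(2)) is nonincreasing in k, where κ_k = π^{k/2}/Γ(k/2 + 1) is the volume of the k-dimensional Euclidean unit ball, given the estimate κ_k²/κ_{k+1}² ≤ (k+2)/(2π). -/
/-!
Adding one to `k` can only enlarge each binomial coefficient and adds a nonnegative term, so
`L_k(2) ≤ L_{k+1}(2)`. Since `π > 3`, `(k+2)/(2π) ≤ (k+1)/4` as soon as `k ≥ 1`, which gives the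
Laguerre inequality; for `k = 0` it reads `1/(3π) ≤ 1/4`. The monotonicity of `g` is a
rearrangement: `g(k+1)/g(k) = 4/(k+1) · κ_k²/κ_{k+1}² · L_k(2)/L_{k+1}(2)`.
-/

noncomputable section

/-- The Laguerre polynomial (positive coefficients normalization) evaluated at 2. -/
def laguerreAtTwo (k : ℕ) : ℝ :=
  ∑ i ∈ Finset.range (k + 1), (k.choose i : ℝ) * 2 ^ i / (i.factorial : ℝ)

/-- The volume of the `k`-dimensional Euclidean unit ball, `κ_k = π^{k/2}/Γ(k/2+1)`. -/
def kappa (k : ℕ) : ℝ := Real.pi ^ ((k : ℝ) / 2) / Real.Gamma ((k : ℝ) / 2 + 1)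

/-- The function `g(k) = 4^k / (k!·κ_k²·L_k(2))`. -/
def gfun (k : ℕ) : ℝ := 4 ^ k / ((k.factorial : ℝ) * kappa k ^ 2 * laguerreAtTwo k)

open Real

lemma laguerreAtTwo_pos (k : ℕ) : 0 < laguerreAtTwo k :=
  Finset.sum_pos' (fun i _ => by positivity) ⟨0, by simp⟩

lemma laguerreAtTwo_zero : laguerreAtTwo 0 = 1 := by
  simp [laguerreAtTwo]

lemma laguerreAtTwo_one : laguerreAtTwo 1 = 3 := by
  norm_num [laguerreAtTwo, Finset.sum_range_succ]

lemma laguerreAtTwo_le_succ (k : ℕ) : laguerreAtTwo k ≤ laguerreAtTwo (k + 1) := by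
  unfold laguerreAtTwo
  calc ∑ i ∈ Finset.range (k + 1), (k.choose i : ℝ) * 2 ^ i / i.factorial
      ≤ ∑ i ∈ Finset.range (k + 1), ((k + 1).choose i : ℝ) * 2 ^ i / i.factorial := by
        gcongr
        omega
    _ ≤ ∑ i ∈ Finset.range (k + 1 + 1), ((k + 1).choose i : ℝ) * 2 ^ i / i.factorial :=
        Finset.sum_le_sum_of_subset_of_nonneg (Finset.range_subset_range.mpr (k + 1).le_succ)
          fun _ _ _ => by positivity

lemma laguerreAtTwo_ratio_le (k : ℕ) :
    ((k : ℝ) + 2) / (2 * π) * (laguerreAtTwo k / laguerreAtTwo (k + 1)) ≤ ((k : ℝ) + 1) / 4 := by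
  have hπ := pi_gt_three
  rcases k.eq_zero_or_pos with rfl | hk
  · rw [laguerreAtTwo_zero, zero_add, laguerreAtTwo_one,
      div_mul_div_comm, div_le_div_iff₀ (by positivity) (by norm_num)]
    norm_num
    linarith
  · have hk : (1 : ℝ) ≤ k := by exact_mod_cast hk
    have hratio : laguerreAtTwo k / laguerreAtTwo (k + 1) ≤ 1 :=
      (div_le_one (laguerreAtTwo_pos _)).mpr (laguerreAtTwo_le_succ k)
    have hfactor : ((k : ℝ) + 2) / (2 * π) ≤ ((k : ℝ) + 1) / 4 := by
      rw [div_le_div_iff₀ (by positivity) (by norm_num)]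
      nlinarith
    calc ((k : ℝ) + 2) / (2 * π) * (laguerreAtTwo k / laguerreAtTwo (k + 1))
        ≤ ((k : ℝ) + 2) / (2 * π) := mul_le_of_le_one_right (by positivity) hratio
      _ ≤ ((k : ℝ) + 1) / 4 := hfactor

lemma kappa_pos (k : ℕ) : 0 < kappa k :=
  div_pos (rpow_pos_of_pos pi_pos _) (Gamma_pos_of_pos (by positivity))

lemma gfun_pos (k : ℕ) : 0 < gfun k := by
  have := kappa_pos k
  have := laguerreAtTwo_pos k
  unfold gfun
  positivity

lemma gfun_succ (k : ℕ) :
    gfun (k + 1) = gfun k * (4 / ((k : ℝ) + 1) *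
      (kappa k ^ 2 / kappa (k + 1) ^ 2 * (laguerreAtTwo k / laguerreAtTwo (k + 1)))) := by
  have := kappa_pos k
  have := kappa_pos (k + 1)
  have := laguerreAtTwo_pos k
  have := laguerreAtTwo_pos (k + 1)
  simp only [gfun, Nat.factorial_succ, Nat.cast_mul, Nat.cast_succ, pow_succ]
  field_simp

lemma gfun_succ_le_iff (k : ℕ) :
    gfun (k + 1) ≤ gfun k ↔
      kappa k ^ 2 / kappa (k + 1) ^ 2 * (laguerreAtTwo k / laguerreAtTwo (k + 1)) ≤
        ((k : ℝ) + 1) / 4 := by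
  rw [gfun_succ, mul_le_iff_le_one_right (gfun_pos k), ← le_div_iff₀' (by positivity),
    one_div_div]

/-- `(k+1)/4 ≥ ((k+2)/(2π))·L_k(2)/L_{k+1}(2)`; consequently, given the estimate
`κ_k²/κ_{k+1}² ≤ (k+2)/(2π)`, the function `g` is nonincreasing. -/
theorem laguerre_ratio_and_g_monotone :
    (∀ k : ℕ, ((k : ℝ) + 1) / 4 ≥
        (((k : ℝ) + 2) / (2 * Real.pi)) * (laguerreAtTwo k / laguerreAtTwo (k + 1))) ∧
      ((∀ k : ℕ, kappa k ^ 2 / kappa (k + 1) ^ 2 ≤ ((k : ℝ) + 2) / (2 * Real.pi)) →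
        ∀ k : ℕ, gfun (k + 1) ≤ gfun k) := by
  refine ⟨laguerreAtTwo_ratio_le, fun hkappa k => (gfun_succ_le_iff k).mpr ?_⟩
  calc kappa k ^ 2 / kappa (k + 1) ^ 2 * (laguerreAtTwo k / laguerreAtTwo (k + 1))
      ≤ ((k : ℝ) + 2) / (2 * π) * (laguerreAtTwo k / laguerreAtTwo (k + 1)) :=
        mul_le_mul_of_nonneg_right (hkappa k)
          (div_nonneg (laguerreAtTwo_pos k).le (laguerreAtTwo_pos (k + 1)).le)
    _ ≤ ((k : ℝ) + 1) / 4 := laguerreAtTwo_ratio_le k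
end
end
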